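/- (Cramér–Wold theorem) Let d ≥ 2 and let P, Q be Borel probability measures on ℝ^d. If for every x ∈ ℝ^d the pushforward of P under the map y ↦ ⟨x, y⟩ from ℝ^d to ℝ equals the pushforward of Q under the same map, then P = Q. -/

import Mathlib

open MeasureTheory
open scoped RealInnerProductSpace

lemma MeasureTheory.charFun_eq_charFun_map_inner {E : Type*} [NormedAddCommGroup E]
    [InnerProductSpace ℝ E] [MeasurableSpace E] [OpensMeasurableSpace E]
    (μ : Measure E) (t : E) :
    charFun μ t = charFun (μ.map (fun y => ⟪t, y⟫)) 1 := by
  rw [charFun_apply, charFun_apply_real, integral_map (by fun_prop) (by fun_prop)]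
  simp [real_inner_comm]

theorem cramer_wold_general
    {d : ℕ}
    (P Q : Measure (EuclideanSpace ℝ (Fin d)))
    [IsProbabilityMeasure P] [IsProbabilityMeasure Q]
    (h : ∀ x : EuclideanSpace ℝ (Fin d),
      P.map (fun y => ⟪x, y⟫) = Q.map (fun y => ⟪x, y⟫)) :
    P = Q :=
  Measure.ext_of_charFun <| funext fun t => by
    rw [charFun_eq_charFun_map_inner, h, ← charFun_eq_charFun_map_inner]

/-- **Cramér–Wold.** If two Borel probability measures on `ℝ^d` (`d ≥ 2`) have
equal pushforwards under every linear functional `y ↦ ⟨x, y⟩`, then they are equal. -/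
theorem cramer_wold
    {d : ℕ} (hd : 2 ≤ d)
    (P Q : Measure (EuclideanSpace ℝ (Fin d)))
    [IsProbabilityMeasure P] [IsProbabilityMeasure Q]
    (h : ∀ x : EuclideanSpace ℝ (Fin d),
      P.map (fun y => ⟪x, y⟫) = Q.map (fun y => ⟪x, y⟫)) :
    P = Q :=
  cramer_wold_general P Q h
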